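/- arXiv:2505.23640 — 2 statements merged into one kernel-verified Lean document; each statement's English description precedes it below -/
import Mathlib

section
/- For any digraph G on node set [n] in which every node exists (node number n1 = n), the graph-derived assignment (A(G), r(G), d(G), δ(G)) satisfies the graph-encoding constraints (C1)–(C8) with n0 = n. -/
/-- A directed walk of length `k` from `u` to `v` along the edge relation `E`. -/
def HasWalk {V : Type*} (E : V → V → Prop) (k : ℕ) (u v : V) : Prop :=
  ∃ f : Fin (k + 1) → V, f 0 = u ∧ f (Fin.last k) = v ∧
    ∀ i : Fin k, E (f i.castSucc) (f i.succ)

/-- `u` reaches `v` : `u = v` or there is a directed path from `u` to `v`. -/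
def Reaches {V : Type*} (E : V → V → Prop) (u v : V) : Prop :=
  ∃ k, HasWalk E k u v

/-- Truncated shortest distance: the length of a shortest directed path from `u` to `v`
(`0` if `u = v`), and the sentinel value `n` if `u` does not reach `v`. -/
noncomputable def distG {V : Type*} (E : V → V → Prop) (n : ℕ) (u v : V) : ℕ :=
  letI := Classical.propDecidable (Reaches E u v)
  if Reaches E u v then sInf {k | HasWalk E k u v} else n

/-- Graph-derived reachability indicator `r(G)`. -/
noncomputable def rG {V : Type*} (E : V → V → Prop) (u v : V) : ℕ :=
  letI := Classical.propDecidable (Reaches E u v)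
  if Reaches E u v then 1 else 0

/-- Graph-derived shortest-path membership indicator `δ(G)`. -/
noncomputable def deltaG {V : Type*} [DecidableEq V] (E : V → V → Prop) (n : ℕ)
    (u v w : V) : ℕ :=
  if u = v then (if w = v then 1 else 0)
  else if w = u ∨ w = v then 1
  else
    letI := Classical.propDecidable
      (Reaches E u w ∧ Reaches E w v ∧ distG E n u w + distG E n w v = distG E n u v)
    if Reaches E u w ∧ Reaches E w v ∧ distG E n u w + distG E n w v = distG E n u v then 1
    else 0

/-- A candidate assignment `(A, r, d, δ)` of the graph encoding on `[n]`. -/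
structure Candidate (n : ℕ) where
  A : Fin n → Fin n → ℕ
  r : Fin n → Fin n → ℕ
  d : Fin n → Fin n → ℕ
  delta : Fin n → Fin n → Fin n → ℕ

/-- The graph-encoding constraints (C1)–(C8), together with the variable-domain
requirements (all of `A, r, δ` binary, `d` ranging over `{0,…,n}`). -/
def Feasible (n0 n : ℕ) (c : Candidate n) : Prop :=
  -- variable domains
  (∀ u v, c.A u v = 0 ∨ c.A u v = 1) ∧
  (∀ u v, c.r u v = 0 ∨ c.r u v = 1) ∧
  (∀ u v, c.d u v ≤ n) ∧
  (∀ u v w, c.delta u v w = 0 ∨ c.delta u v w = 1) ∧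
  -- (C1)
  (n0 ≤ ∑ v, c.A v v) ∧
  (∀ v : Fin n, ∀ h : (v : ℕ) + 1 < n, c.A ⟨(v : ℕ) + 1, h⟩ ⟨(v : ℕ) + 1, h⟩ ≤ c.A v v) ∧
  -- (C2)
  (∀ u v, u ≠ v → (c.A u u = 0 ∨ c.A v v = 0) →
    c.A u v = 0 ∧ c.r u v = 0 ∧ c.d u v = n) ∧
  -- (C3)
  (∀ v, c.r v v = 1 ∧ c.d v v = 0 ∧ c.delta v v v = 1 ∧ ∀ w, w ≠ v → c.delta v v w = 0) ∧
  -- (C4)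
  (∀ u v, u ≠ v → (c.A u v = 1 → c.r u v = 1 ∧ c.d u v = 1) ∧ (c.A u v = 0 → 2 ≤ c.d u v)) ∧
  -- (C5)
  (∀ u v, u ≠ v → (c.d u v < n ↔ c.r u v = 1)) ∧
  -- (C6)
  (∀ u v w, u ≠ v → v ≠ w → u ≠ w →
    (c.delta u v w = 1 → c.r u w = 1 ∧ c.r w v = 1) ∧
    (c.r u w = 1 → c.r w v = 1 → c.r u v = 1)) ∧
  -- (C7)
  (∀ u v, u ≠ v → c.delta u v u = 1 ∧ c.delta u v v = 1 ∧
    ((c.A u v = 1 ∨ c.r u v = 0) → ∑ w, c.delta u v w = 2) ∧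
    (c.A u v = 0 → c.r u v = 1 → 2 < ∑ w, c.delta u v w)) ∧
  -- (C8)
  (∀ u v w, u ≠ v → v ≠ w → u ≠ w →
    (c.delta u v w = 1 → c.d u v = c.d u w + c.d w v) ∧
    (c.r u w = 1 → c.r w v = 1 → c.delta u v w = 0 → c.d u v < c.d u w + c.d w v))

/-- The edge relation of the digraph whose adjacency matrix is `B` :
edge `u → v` exists iff `u ≠ v` and `B u v = 1`. -/
def edgeRel {n : ℕ} (B : Fin n → Fin n → ℕ) : Fin n → Fin n → Prop :=
  fun u v => u ≠ v ∧ B u v = 1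

/-- `B` is the adjacency matrix of a digraph on `[n]` with existing node set
`{0,…,n1−1}` for some `n0 ≤ n1 ≤ n`, all edges joining distinct existing nodes. -/
def IsAdjMatrix (n0 n : ℕ) (B : Fin n → Fin n → ℕ) : Prop :=
  (∀ u v, B u v = 0 ∨ B u v = 1) ∧
  (∃ n1, n0 ≤ n1 ∧ n1 ≤ n ∧ ∀ v : Fin n, (B v v = 1 ↔ (v : ℕ) < n1)) ∧
  (∀ u v, u ≠ v → B u v = 1 → B u u = 1 ∧ B v v = 1)

/-- The graph-derived assignment `(A(G), r(G), d(G), δ(G))` of a digraph on `[n]` in which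
every node exists, given by its (irreflexive) edge relation `E`. -/
noncomputable def graphCandidate (n : ℕ) (E : Fin n → Fin n → Prop) : Candidate n where
  A := fun u v =>
    if u = v then 1
    else
      letI := Classical.propDecidable (E u v)
      if E u v then 1 else 0
  r := fun u v => rG E u v
  d := fun u v => distG E n u v
  delta := fun u v w => deltaG E n u v w


section WalkLemmas

variable {V : Type*} {E : V → V → Prop}

/-- ℕ-indexed formulation of walks, easier to manipulate. -/
def HW (E : V → V → Prop) (k : ℕ) (u v : V) : Prop :=
  ∃ f : ℕ → V, f 0 = u ∧ f k = v ∧ ∀ i < k, E (f i) (f (i+1))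

lemma hasWalk_iff_hw {k : ℕ} {u v : V} : HasWalk E k u v ↔ HW E k u v := by
  constructor
  · rintro ⟨f, h0, hl, he⟩
    refine ⟨fun m => f ⟨min m k, by omega⟩, ?_, ?_, ?_⟩
    · show f ⟨min 0 k, by omega⟩ = u
      have h : (⟨min 0 k, by omega⟩ : Fin (k+1)) = 0 := by ext; simp
      rw [h]; exact h0
    · show f ⟨min k k, by omega⟩ = v
      have h : (⟨min k k, by omega⟩ : Fin (k+1)) = Fin.last k := by
        ext; simp [Fin.last]
      rw [h]; exact hl
    · intro i hi
      show E (f ⟨min i k, by omega⟩) (f ⟨min (i+1) k, by omega⟩)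
      have h1 : (⟨min i k, by omega⟩ : Fin (k+1)) = (⟨i, hi⟩ : Fin k).castSucc := by
        ext; simp [Nat.min_eq_left (le_of_lt hi), Fin.castSucc]
      have h2 : (⟨min (i+1) k, by omega⟩ : Fin (k+1)) = (⟨i, hi⟩ : Fin k).succ := by
        ext; simp [Nat.min_eq_left hi, Fin.succ]
      rw [h1, h2]; exact he ⟨i, hi⟩
  · rintro ⟨f, h0, hk, he⟩
    refine ⟨fun i => f i, ?_, ?_, ?_⟩
    · simpa using h0
    · simpa [Fin.last] using hk
    · intro i
      show E (f (i.castSucc : ℕ)) (f (i.succ : ℕ))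
      have h1 : ((i.castSucc : Fin (k+1)) : ℕ) = (i : ℕ) := rfl
      have h2 : ((i.succ : Fin (k+1)) : ℕ) = (i : ℕ) + 1 := rfl
      rw [h1, h2]; exact he i i.isLt

lemma reaches_iff_hw {u v : V} : Reaches E u v ↔ ∃ k, HW E k u v := by
  unfold Reaches; simp only [hasWalk_iff_hw]

lemma hw_zero {u v : V} : HW E 0 u v ↔ u = v := by
  constructor
  · rintro ⟨f, h0, hk, -⟩; rw [← h0, hk]
  · rintro rfl; exact ⟨fun _ => u, rfl, rfl, fun i hi => absurd hi (Nat.not_lt_zero i)⟩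

lemma hw_one {u v : V} : HW E 1 u v ↔ E u v := by
  classical
  constructor
  · rintro ⟨f, h0, hk, he⟩
    have := he 0 (by omega)
    rwa [h0, hk] at this
  · intro h
    refine ⟨fun i => if i = 0 then u else v, by simp, by simp, ?_⟩
    intro i hi
    interval_cases i
    simpa using h

lemma hw_concat {k l : ℕ} {u w v : V} (h1 : HW E k u w) (h2 : HW E l w v) :
    HW E (k + l) u v := by
  classical
  obtain ⟨f, hf0, hfk, hfe⟩ := h1
  obtain ⟨g, hg0, hgl, hge⟩ := h2
  refine ⟨fun m => if m ≤ k then (if m = k then g 0 else f m) else g (m - k), ?_, ?_, ?_⟩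
  · show (if 0 ≤ k then (if 0 = k then g 0 else f 0) else g (0 - k)) = u
    rcases Nat.eq_zero_or_pos k with hk | hk
    · subst hk
      rw [if_pos le_rfl, if_pos rfl, hg0, ← hfk]; exact hf0
    · rw [if_pos (Nat.zero_le k), if_neg (by omega)]; exact hf0
  · show (if k + l ≤ k then (if k + l = k then g 0 else f (k + l)) else g (k + l - k)) = v
    rcases Nat.eq_zero_or_pos l with hl | hl
    · subst hl
      simpa using hgl
    · rw [if_neg (by omega)]
      have h : k + l - k = l := by omega
      rw [h]; exact hgl
  · intro i hi
    show E (if i ≤ k then (if i = k then g 0 else f i) else g (i - k))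
         (if i + 1 ≤ k then (if i + 1 = k then g 0 else f (i + 1)) else g (i + 1 - k))
    have hfg : ∀ m, k ≤ m →
        (if m ≤ k then (if m = k then g 0 else f m) else g (m - k)) = g (m - k) := by
      intro m hm
      rcases eq_or_lt_of_le hm with h | h
      · subst h
        rw [if_pos le_rfl, if_pos rfl, Nat.sub_self]
      · rw [if_neg (by omega)]
    by_cases hik : i + 1 ≤ k
    · rw [if_pos (by omega), if_neg (by omega), if_pos hik]
      by_cases hik1 : i + 1 = k
      · rw [if_pos hik1, hg0, ← hfk, ← hik1]
        exact hfe i (by omega)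
      · rw [if_neg hik1]
        exact hfe i (by omega)
    · rw [hfg i (by omega), hfg (i+1) (by omega)]
      have h1 : i + 1 - k = (i - k) + 1 := by omega
      rw [h1]
      exact hge (i - k) (by omega)

lemma hw_prefix {k j : ℕ} {f : ℕ → V} (hj : j ≤ k)
    (he : ∀ i < k, E (f i) (f (i+1))) : HW E j (f 0) (f j) :=
  ⟨f, rfl, rfl, fun i hi => he i (by omega)⟩

lemma hw_suffix {k j : ℕ} {f : ℕ → V} (hj : j ≤ k)
    (he : ∀ i < k, E (f i) (f (i+1))) : HW E (k - j) (f j) (f k) := by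
  refine ⟨fun m => f (j + m), rfl, ?_, ?_⟩
  · show f (j + (k - j)) = f k
    rw [Nat.add_sub_cancel' hj]
  · intro i hi
    show E (f (j + i)) (f (j + (i + 1)))
    have h1 : j + (i + 1) = (j + i) + 1 := by omega
    rw [h1]
    exact he (j + i) (by omega)

lemma hw_splice {f : ℕ → V} {k : ℕ} {x y : V} (i j : ℕ)
    (h0 : f 0 = x) (hk : f k = y) (he : ∀ m < k, E (f m) (f (m+1)))
    (hij : i < j) (hjk : j ≤ k) (hf : f i = f j) :
    HW E (k - (j - i)) x y := by
  classical
  refine ⟨fun m => if m ≤ i then f m else f (m + (j - i)), ?_, ?_, ?_⟩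
  · show (if 0 ≤ i then f 0 else f (0 + (j - i))) = x
    rw [if_pos (Nat.zero_le i)]; exact h0
  · show (if k - (j - i) ≤ i then f (k - (j - i)) else f (k - (j - i) + (j - i))) = y
    by_cases h : k - (j - i) ≤ i
    · have h1 : k - (j - i) = i := by omega
      have h2 : j = k := by omega
      rw [if_pos h, h1, hf, h2, hk]
    · rw [if_neg h]
      have h1 : k - (j - i) + (j - i) = k := by omega
      rw [h1, hk]
  · intro m hm
    show E (if m ≤ i then f m else f (m + (j - i)))
         (if m + 1 ≤ i then f (m + 1) else f (m + 1 + (j - i)))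
    by_cases h1 : m + 1 ≤ i
    · rw [if_pos (by omega), if_pos h1]
      exact he m (by omega)
    · by_cases h2 : m ≤ i
      · have hmi : m = i := by omega
        rw [if_pos h2, if_neg h1, hmi, hf]
        have h3 : i + 1 + (j - i) = j + 1 := by omega
        rw [h3]
        exact he j (by omega)
      · rw [if_neg h2, if_neg (by omega)]
        have h3 : m + 1 + (j - i) = (m + (j - i)) + 1 := by omega
        rw [h3]
        exact he (m + (j - i)) (by omega)

end WalkLemmas

section FinLemmas

variable {n : ℕ} {E : Fin n → Fin n → Prop}

lemma exists_hw_lt {u v : Fin n} (h : Reaches E u v) :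
    ∃ k, k < n ∧ HW E k u v := by
  obtain ⟨k, hk⟩ := reaches_iff_hw.mp h
  induction k using Nat.strong_induction_on with
  | _ k ih =>
    by_cases hkn : k < n
    · exact ⟨k, hkn, hk⟩
    · push_neg at hkn
      obtain ⟨f, h0, hke, he⟩ := hk
      have hcard : Fintype.card (Fin n) < Fintype.card (Fin (k+1)) := by simp; omega
      obtain ⟨i, j, hne, hfe⟩ :=
        Fintype.exists_ne_map_eq_of_card_lt (fun i : Fin (k+1) => f i) hcard
      rcases Ne.lt_or_gt hne with hlt | hlt
      · have := hw_splice (E := E) (i : ℕ) (j : ℕ) h0 hke he hlt (by omega) hfe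
        exact ih (k - ((j : ℕ) - (i : ℕ))) (by omega) this
      · have := hw_splice (E := E) (j : ℕ) (i : ℕ) h0 hke he hlt (by omega) hfe.symm
        exact ih (k - ((i : ℕ) - (j : ℕ))) (by omega) this

lemma reaches_refl (v : Fin n) : Reaches E v v :=
  reaches_iff_hw.mpr ⟨0, hw_zero.mpr rfl⟩

lemma reaches_of_edge {u v : Fin n} (h : E u v) : Reaches E u v :=
  reaches_iff_hw.mpr ⟨1, hw_one.mpr h⟩

lemma reaches_trans {u w v : Fin n} (h1 : Reaches E u w) (h2 : Reaches E w v) :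
    Reaches E u v := by
  obtain ⟨k, hk⟩ := reaches_iff_hw.mp h1
  obtain ⟨l, hl⟩ := reaches_iff_hw.mp h2
  exact reaches_iff_hw.mpr ⟨k + l, hw_concat hk hl⟩

lemma gc_dist_eq_sInf {u v : Fin n} (h : Reaches E u v) :
    distG E n u v = sInf {k | HasWalk E k u v} := by
  unfold distG; rw [if_pos h]

lemma gc_dist_eq_of_not_reaches {u v : Fin n} (h : ¬ Reaches E u v) :
    distG E n u v = n := by
  unfold distG; rw [if_neg h]

lemma gc_hw_dist {u v : Fin n} (h : Reaches E u v) : HW E (distG E n u v) u v := by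
  rw [gc_dist_eq_sInf h]
  have hne : {k | HasWalk E k u v}.Nonempty := h
  have := Nat.sInf_mem hne
  exact hasWalk_iff_hw.mp this

lemma gc_dist_le_of_hw {u v : Fin n} {k : ℕ} (h : HW E k u v) : distG E n u v ≤ k := by
  have hr : Reaches E u v := reaches_iff_hw.mpr ⟨k, h⟩
  rw [gc_dist_eq_sInf hr]
  exact Nat.sInf_le (hasWalk_iff_hw.mpr h)

lemma gc_dist_lt_of_reaches (hn : 0 < n) {u v : Fin n} (h : Reaches E u v) :
    distG E n u v < n := by
  obtain ⟨k, hkn, hk⟩ := exists_hw_lt h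
  exact lt_of_le_of_lt (gc_dist_le_of_hw hk) hkn

lemma gc_dist_le_n (hn : 0 < n) (u v : Fin n) : distG E n u v ≤ n := by
  by_cases h : Reaches E u v
  · exact le_of_lt (gc_dist_lt_of_reaches hn h)
  · rw [gc_dist_eq_of_not_reaches h]

lemma gc_dist_self (v : Fin n) : distG E n v v = 0 := by
  have := gc_dist_le_of_hw (E := E) (hw_zero.mpr (rfl : v = v))
  omega

lemma gc_dist_pos (hn : 0 < n) {u v : Fin n} (h : u ≠ v) : 0 < distG E n u v := by
  by_cases hr : Reaches E u v
  · rcases Nat.eq_zero_or_pos (distG E n u v) with h0 | h0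
    · exfalso
      have := gc_hw_dist hr
      rw [h0] at this
      exact h (hw_zero.mp this)
    · exact h0
  · rw [gc_dist_eq_of_not_reaches hr]; exact hn

lemma gc_dist_edge (hirr : ∀ w : Fin n, ¬ E w w) {u v : Fin n} (h : E u v) :
    distG E n u v = 1 := by
  have h1 : distG E n u v ≤ 1 := gc_dist_le_of_hw (hw_one.mpr h)
  have h2 : u ≠ v := fun he => hirr u (he ▸ h)
  have h3 := gc_dist_pos (E := E) (Fin.pos u) h2
  omega

lemma gc_dist_triangle {u w v : Fin n} (h1 : Reaches E u w) (h2 : Reaches E w v) :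
    distG E n u v ≤ distG E n u w + distG E n w v :=
  gc_dist_le_of_hw (hw_concat (gc_hw_dist h1) (gc_hw_dist h2))

lemma gc_dist_ge_two (hn : 2 ≤ n) {u v : Fin n} (hne : u ≠ v) (hE : ¬ E u v) :
    2 ≤ distG E n u v := by
  by_cases hr : Reaches E u v
  · have hw := gc_hw_dist hr
    have h0 : distG E n u v ≠ 0 := by
      intro h; rw [h] at hw; exact hne (hw_zero.mp hw)
    have h1 : distG E n u v ≠ 1 := by
      intro h; rw [h] at hw; exact hE (hw_one.mp hw)
    omega
  · rw [gc_dist_eq_of_not_reaches hr]; exact hn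

end FinLemmas


section MoreLemmas

variable {n : ℕ} {E : Fin n → Fin n → Prop}

lemma gc_rG_eq_one {u v : Fin n} : rG E u v = 1 ↔ Reaches E u v := by
  unfold rG; split_ifs with h <;> simp [h]

lemma gc_rG_eq_zero {u v : Fin n} : rG E u v = 0 ↔ ¬ Reaches E u v := by
  unfold rG; split_ifs with h <;> simp [h]

lemma gc_deltaG_mid {u v w : Fin n} (huv : u ≠ v) (hwu : w ≠ u) (hwv : w ≠ v) :
    deltaG E n u v w = 1 ↔
      (Reaches E u w ∧ Reaches E w v ∧ distG E n u w + distG E n w v = distG E n u v) := by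
  unfold deltaG
  rw [if_neg huv, if_neg (by tauto : ¬ (w = u ∨ w = v))]
  split_ifs with h <;> simp [h]

lemma gc_deltaG_mid_zero {u v w : Fin n} (huv : u ≠ v) (hwu : w ≠ u) (hwv : w ≠ v)
    (hP : ¬ (Reaches E u w ∧ Reaches E w v ∧
      distG E n u w + distG E n w v = distG E n u v)) :
    deltaG E n u v w = 0 := by
  unfold deltaG
  rw [if_neg huv, if_neg (by tauto : ¬ (w = u ∨ w = v)), if_neg hP]

lemma gc_deltaG_left {u v : Fin n} (huv : u ≠ v) : deltaG E n u v u = 1 := by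
  unfold deltaG
  rw [if_neg huv, if_pos (Or.inl rfl)]

lemma gc_deltaG_right {u v : Fin n} (huv : u ≠ v) : deltaG E n u v v = 1 := by
  unfold deltaG
  rw [if_neg huv, if_pos (Or.inr rfl)]

end MoreLemmas

/-- For any digraph `G` on `[n]` in which every node exists, the
graph-derived assignment `(A(G), r(G), d(G), δ(G))` satisfies the graph-encoding
constraints (C1)–(C8) with `n0 = n`. -/
theorem graphCandidate_feasible (n : ℕ) (hn : 2 ≤ n)
    (E : Fin n → Fin n → Prop) (hirr : ∀ v, ¬ E v v) :
    Feasible n n (graphCandidate n E) := by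
  classical
  have hn0 : 0 < n := by omega
  have hAdiag : ∀ v : Fin n, (graphCandidate n E).A v v = 1 := by
    intro v; simp [graphCandidate]
  have hAne : ∀ u v : Fin n, u ≠ v → ((graphCandidate n E).A u v = 1 ↔ E u v) := by
    intro u v huv
    simp only [graphCandidate, if_neg huv]
    split_ifs with h <;> simp [h]
  have hAne0 : ∀ u v : Fin n, u ≠ v → ((graphCandidate n E).A u v = 0 ↔ ¬ E u v) := by
    intro u v huv
    simp only [graphCandidate, if_neg huv]
    split_ifs with h <;> simp [h]
  have hr1 : ∀ u v : Fin n, (graphCandidate n E).r u v = 1 ↔ Reaches E u v :=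
    fun u v => gc_rG_eq_one
  have hr0 : ∀ u v : Fin n, (graphCandidate n E).r u v = 0 ↔ ¬ Reaches E u v :=
    fun u v => gc_rG_eq_zero
  have hdeq : ∀ u v : Fin n, (graphCandidate n E).d u v = distG E n u v := fun _ _ => rfl
  have hdel : ∀ u v w : Fin n, (graphCandidate n E).delta u v w = deltaG E n u v w :=
    fun _ _ _ => rfl
  refine ⟨?_, ?_, ?_, ?_, ?_, ?_, ?_, ?_, ?_, ?_, ?_, ?_, ?_⟩
  · -- A binary
    intro u v
    by_cases h : u = v
    · subst h; right; exact hAdiag u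
    · by_cases hE : E u v
      · right; exact (hAne u v h).mpr hE
      · left; exact (hAne0 u v h).mpr hE
  · -- r binary
    intro u v
    show rG E u v = 0 ∨ rG E u v = 1
    unfold rG; split_ifs <;> simp
  · -- d ≤ n
    intro u v
    rw [hdeq]
    exact gc_dist_le_n hn0 u v
  · -- delta binary
    intro u v w
    rw [hdel]
    unfold deltaG; split_ifs <;> simp
  · -- C1 sum
    have : ∑ v : Fin n, (graphCandidate n E).A v v = n := by
      rw [Finset.sum_congr rfl (fun v _ => hAdiag v)]
      simp
    omega
  · -- C1 monotone
    intro v h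
    rw [hAdiag, hAdiag]
  · -- C2
    intro u v hne habs
    exfalso
    rcases habs with h | h <;> rw [hAdiag] at h <;> omega
  · -- C3
    intro v
    refine ⟨(hr1 v v).mpr (reaches_refl v), gc_dist_self v, ?_, ?_⟩
    · rw [hdel]; unfold deltaG; rw [if_pos rfl, if_pos rfl]
    · intro w hw
      rw [hdel]; unfold deltaG; rw [if_pos rfl, if_neg hw]
  · -- C4
    intro u v hne
    constructor
    · intro hA1
      have hE := (hAne u v hne).mp hA1
      exact ⟨(hr1 u v).mpr (reaches_of_edge hE), (hdeq u v) ▸ gc_dist_edge hirr hE⟩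
    · intro hA0
      rw [hdeq]
      exact gc_dist_ge_two hn hne ((hAne0 u v hne).mp hA0)
  · -- C5
    intro u v hne
    rw [hdeq]
    constructor
    · intro hlt
      by_cases hr : Reaches E u v
      · exact (hr1 u v).mpr hr
      · rw [gc_dist_eq_of_not_reaches hr] at hlt; omega
    · intro h1
      exact gc_dist_lt_of_reaches hn0 ((hr1 u v).mp h1)
  · -- C6
    intro u v w huv hvw huw
    constructor
    · intro hδ
      rw [hdel] at hδ
      obtain ⟨h1, h2, -⟩ := (gc_deltaG_mid huv (Ne.symm huw) (Ne.symm hvw)).mp hδ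
      exact ⟨(hr1 u w).mpr h1, (hr1 w v).mpr h2⟩
    · intro h1 h2
      exact (hr1 u v).mpr (reaches_trans ((hr1 u w).mp h1) ((hr1 w v).mp h2))
  · -- C7
    intro u v huv
    have hδu : (graphCandidate n E).delta u v u = 1 := by
      rw [hdel]; exact gc_deltaG_left huv
    have hδv : (graphCandidate n E).delta u v v = 1 := by
      rw [hdel]; exact gc_deltaG_right huv
    refine ⟨hδu, hδv, ?_, ?_⟩
    · intro hcase
      have hform : ∀ w : Fin n, (graphCandidate n E).delta u v w =
          (if w = u then 1 else 0) + (if w = v then (1:ℕ) else 0) := by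
        intro w
        by_cases hwu : w = u
        · subst hwu
          rw [if_pos rfl, if_neg huv, hδu]
        · by_cases hwv : w = v
          · subst hwv
            rw [if_neg hwu, if_pos rfl, hδv]
          · rw [if_neg hwu, if_neg hwv, hdel]
            have hP : ¬ (Reaches E u w ∧ Reaches E w v ∧
                distG E n u w + distG E n w v = distG E n u v) := by
              rcases hcase with hA | hr
              · have hE := (hAne u v huv).mp hA
                have hduv : distG E n u v = 1 := gc_dist_edge hirr hE
                rintro ⟨h1, h2, h3⟩
                have p1 : 0 < distG E n u w :=
                  gc_dist_pos hn0 (fun h => hwu h.symm)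
                have p2 : 0 < distG E n w v := gc_dist_pos hn0 hwv
                omega
              · rintro ⟨h1, h2, -⟩
                exact ((hr0 u v).mp hr) (reaches_trans h1 h2)
            exact gc_deltaG_mid_zero huv hwu hwv hP
      rw [Finset.sum_congr rfl (fun w _ => hform w), Finset.sum_add_distrib]
      simp
    · intro hA0 hre1
      have hE : ¬ E u v := (hAne0 u v huv).mp hA0
      have hr : Reaches E u v := (hr1 u v).mp hre1
      have hd2 : 2 ≤ distG E n u v := gc_dist_ge_two hn huv hE
      obtain ⟨f, h0, hk, he⟩ := gc_hw_dist hr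
      have hEuw : E u (f 1) := by
        have := he 0 (by omega)
        rwa [h0] at this
      have hwu : f 1 ≠ u := fun h => hirr u (h ▸ hEuw)
      have hwv : f 1 ≠ v := fun h => hE (h ▸ hEuw)
      have hruw : Reaches E u (f 1) := reaches_of_edge hEuw
      have hsuf : HW E (distG E n u v - 1) (f 1) v := by
        have h := hw_suffix (E := E) (k := distG E n u v) (j := 1) (by omega) he
        rwa [hk] at h
      have hrwv : Reaches E (f 1) v := reaches_iff_hw.mpr ⟨_, hsuf⟩
      have hduw : distG E n u (f 1) = 1 := gc_dist_edge hirr hEuw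
      have hdwv : distG E n (f 1) v = distG E n u v - 1 := by
        have hle : distG E n (f 1) v ≤ distG E n u v - 1 := gc_dist_le_of_hw hsuf
        have hge : distG E n u v ≤ distG E n u (f 1) + distG E n (f 1) v :=
          gc_dist_triangle hruw hrwv
        omega
      have hδw : (graphCandidate n E).delta u v (f 1) = 1 := by
        rw [hdel]
        exact (gc_deltaG_mid huv hwu hwv).mpr ⟨hruw, hrwv, by rw [hduw, hdwv]; omega⟩
      have hsum3 : ∑ w ∈ ({u, v, f 1} : Finset (Fin n)), (graphCandidate n E).delta u v w
          = 3 := by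
        rw [Finset.sum_insert (by simp [huv, Ne.symm hwu]),
            Finset.sum_insert (by simp [Ne.symm hwv]),
            Finset.sum_singleton, hδu, hδv, hδw]
        omega
      have hle3 : ∑ w ∈ ({u, v, f 1} : Finset (Fin n)), (graphCandidate n E).delta u v w
          ≤ ∑ w, (graphCandidate n E).delta u v w :=
        Finset.sum_le_sum_of_subset (Finset.subset_univ _)
      omega
  · -- C8
    intro u v w huv hvw huw
    constructor
    · intro hδ
      rw [hdel] at hδ
      obtain ⟨-, -, h3⟩ := (gc_deltaG_mid huv (Ne.symm huw) (Ne.symm hvw)).mp hδ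
      rw [hdeq, hdeq, hdeq]
      omega
    · intro hruw hrwv hδ0
      have h1 := (hr1 u w).mp hruw
      have h2 := (hr1 w v).mp hrwv
      have htri : distG E n u v ≤ distG E n u w + distG E n w v := gc_dist_triangle h1 h2
      have hne3 : distG E n u w + distG E n w v ≠ distG E n u v := by
        intro heq
        have := (gc_deltaG_mid huv (Ne.symm huw) (Ne.symm hvw)).mpr ⟨h1, h2, heq⟩
        rw [hdel] at hδ0
        omega
      rw [hdeq, hdeq, hdeq]
      omega
end

section
/- Suppose a candidate assignment (A, r, d, δ) satisfies the graph-encoding constraints (C1)–(C8) and G is the digraph on [n] whose adjacency matrix equals A. Then for all distinct u, v: d(u,v) = 1 if and only if d(G)(u,v) = 1, if and only if A(u,v) = 1; and when A(u,v) = 1, additionally r(u,v) = 1 = r(G)(u,v) and δ(u,v,w) = 0 = δ(G)(u,v,w) for every w ∉ {u,v}. -/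
lemma hasWalk_zero {V : Type*} {E : V → V → Prop} {u v : V} :
    HasWalk E 0 u v ↔ u = v := by
  constructor
  · rintro ⟨f, h0, hl, _⟩
    rw [← h0, ← hl]; rfl
  · rintro rfl
    exact ⟨fun _ => u, rfl, rfl, fun i => i.elim0⟩

lemma hasWalk_one {V : Type*} {E : V → V → Prop} {u v : V} :
    HasWalk E 1 u v ↔ E u v := by
  constructor
  · rintro ⟨f, h0, hl, he⟩
    have h := he 0
    have h00 : f ((0 : Fin 1).castSucc) = u := h0
    have h11 : f ((0 : Fin 1).succ) = v := hl
    rwa [h00, h11] at h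
  · intro h
    refine ⟨![u, v], rfl, rfl, fun i => ?_⟩
    fin_cases i
    simpa using h

lemma distG_pos {V : Type*} {E : V → V → Prop} {n : ℕ} {u v : V}
    (huv : u ≠ v) (hn : 0 < n) : 0 < distG E n u v := by
  unfold distG
  split
  · rename_i h
    rcases h with ⟨k, hk⟩
    have hne : {k | HasWalk E k u v}.Nonempty := ⟨k, hk⟩
    have hmem := Nat.sInf_mem hne
    rcases Nat.eq_zero_or_pos (sInf {k | HasWalk E k u v}) with h0 | h0
    · rw [h0] at hmem
      exact absurd (hasWalk_zero.mp hmem) huv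
    · exact h0
  · exact hn

lemma distG_eq_one {V : Type*} {E : V → V → Prop} {n : ℕ} {u v : V}
    (huv : u ≠ v) (h : E u v) : distG E n u v = 1 := by
  have hreach : Reaches E u v := ⟨1, hasWalk_one.mpr h⟩
  unfold distG
  rw [if_pos hreach]
  have h1 : (1 : ℕ) ∈ {k | HasWalk E k u v} := hasWalk_one.mpr h
  have hle : sInf {k | HasWalk E k u v} ≤ 1 := Nat.sInf_le h1
  have hmem := Nat.sInf_mem ⟨1, h1⟩
  interval_cases h : sInf {k | HasWalk E k u v}
  · exact absurd (hasWalk_zero.mp hmem) huv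
  · rfl

lemma distG_one_imp {V : Type*} {E : V → V → Prop} {n : ℕ} {u v : V}
    (hn : 2 ≤ n) (h : distG E n u v = 1) : E u v := by
  unfold distG at h
  split at h
  · rename_i hr
    rcases hr with ⟨k, hk⟩
    have hmem := Nat.sInf_mem (⟨k, hk⟩ : {k | HasWalk E k u v}.Nonempty)
    rw [h] at hmem
    exact hasWalk_one.mp hmem
  · omega

/-- For a feasible candidate assignment `(A, r, d, δ)` and the digraph `G`
on `[n]` whose adjacency matrix equals `A` : for distinct `u, v` we have
`d(u,v) = 1 ↔ d(G)(u,v) = 1 ↔ A(u,v) = 1`, and if `A(u,v) = 1` then additionally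
`r(u,v) = 1 = r(G)(u,v)` and `δ(u,v,w) = 0 = δ(G)(u,v,w)` for every `w ∉ {u,v}`. -/
theorem feasible_base_case (n0 n : ℕ) (h2 : 2 ≤ n0) (hn : n0 ≤ n)
    (c : Candidate n) (hc : Feasible n0 n c) :
    ∀ u v : Fin n, u ≠ v →
      ((c.d u v = 1 ↔ distG (edgeRel c.A) n u v = 1) ∧
       (distG (edgeRel c.A) n u v = 1 ↔ c.A u v = 1)) ∧
      (c.A u v = 1 →
        c.r u v = 1 ∧ rG (edgeRel c.A) u v = 1 ∧
        ∀ w : Fin n, w ≠ u → w ≠ v →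
          c.delta u v w = 0 ∧ deltaG (edgeRel c.A) n u v w = 0) := by
  obtain ⟨hA01, hr01, hdle, hδ01, _, _, _, _, hC4, _, _, hC7, _⟩ := hc
  have hn2 : 2 ≤ n := le_trans h2 hn
  intro u v huv
  have hAiff : c.A u v = 1 ↔ distG (edgeRel c.A) n u v = 1 := by
    constructor
    · intro hA
      exact distG_eq_one huv ⟨huv, hA⟩
    · intro hd
      exact (distG_one_imp hn2 hd).2
  have hdiff : c.d u v = 1 ↔ c.A u v = 1 := by
    constructor
    · intro hd
      rcases hA01 u v with h0 | h1
      · have := (hC4 u v huv).2 h0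
        omega
      · exact h1
    · intro hA
      exact ((hC4 u v huv).1 hA).2
  refine ⟨⟨hdiff.trans hAiff, hAiff.symm⟩, ?_⟩
  intro hA
  have hr : c.r u v = 1 := ((hC4 u v huv).1 hA).1
  have hE : edgeRel c.A u v := ⟨huv, hA⟩
  have hreach : Reaches (edgeRel c.A) u v := ⟨1, hasWalk_one.mpr hE⟩
  refine ⟨hr, by simp [rG, hreach], ?_⟩
  intro w hwu hwv
  constructor
  · -- c.delta u v w = 0
    obtain ⟨hδu, hδv, hsum2, _⟩ := hC7 u v huv
    have hsum := hsum2 (Or.inl hA)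
    have hsub : ∑ x ∈ ({u, v, w} : Finset (Fin n)), c.delta u v x ≤ ∑ x, c.delta u v x :=
      Finset.sum_le_sum_of_subset (Finset.subset_univ _)
    have heq : ∑ x ∈ ({u, v, w} : Finset (Fin n)), c.delta u v x
        = c.delta u v u + c.delta u v v + c.delta u v w := by
      rw [Finset.sum_insert (by simp [huv, hwu.symm]),
        Finset.sum_insert (by simp [hwv.symm]), Finset.sum_singleton]
      ring
    rw [heq, hsum, hδu, hδv] at hsub
    omega
  · -- deltaG = 0
    unfold deltaG
    rw [if_neg huv, if_neg (by push_neg; exact ⟨hwu, hwv⟩)]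
    split
    · rename_i hcond
      exfalso
      obtain ⟨h1, h2', h3⟩ := hcond
      have d1 : 0 < distG (edgeRel c.A) n u w := distG_pos hwu.symm (by omega)
      have d2 : 0 < distG (edgeRel c.A) n w v := distG_pos hwv (by omega)
      have := distG_eq_one (n := n) huv hE
      omega
    · rfl
end
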